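/- Let d ≥ 1, e = (1,...,1) ∈ ℝ^d, T̃ > 0, and let Ũ = {t ∈ ℝ^d : ⟨t, e⟩ ≥ 0, t_i ≤ c_i T̃ for all i} for positive constants c_i. Let Z be the set of integer points z ∈ ℤ^d lying on the hyperplane face π_0 = {t ∈ closure(Ũ) : ⟨t,e⟩ = 0} (enlarged by distance d−1 in the first coordinate as needed). Then the union of translated positive orthants ∪_{z ∈ Z} {t : t ≥ z − d·e} covers Ũ. -/

import Mathlib

/-!
Round every coordinate of the projection `t̂ = t − (⟨t,e⟩/d)e` down, then round up exactly as many
coordinates as the fractional parts add up to. The resulting integer point `z` has the same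
coordinate sum `0` as `t̂` and `|zᵢ − t̂ᵢ| ≤ 1`; since `⟨t,e⟩ ≥ 0` gives `t̂ ≤ t`, also
`zᵢ − tᵢ ≤ 1 ≤ d`.
-/

open Finset

theorem Finset.sum_sub_sum_div_card {ι : Type*} [Fintype ι] (t : ι → ℝ) :
    ∑ i, (t i - (∑ j, t j) / Fintype.card ι) = 0 := by
  rcases isEmpty_or_nonempty ι with hι | hι
  · simp
  · rw [sum_sub_distrib, sum_const, card_univ, nsmul_eq_mul,
      mul_div_cancel₀ _ (by positivity), sub_self]

theorem exists_int_sum_eq_and_abs_sub_le_one {ι : Type*} [Fintype ι] (x : ι → ℝ) (n : ℤ)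
    (hx : ∑ i, x i = n) : ∃ z : ι → ℤ, ∑ i, z i = n ∧ ∀ i, |(z i : ℝ) - x i| ≤ 1 := by
  classical
  set k : ℤ := n - ∑ i, ⌊x i⌋ with hk_def
  have hk : (k : ℝ) = ∑ i, Int.fract (x i) := by
    simp only [hk_def, Int.fract, sum_sub_distrib, hx]
    push_cast
    rfl
  have hk_nonneg : 0 ≤ k := by
    have : (0 : ℝ) ≤ k := hk ▸ sum_nonneg fun i _ => Int.fract_nonneg (x i)
    exact_mod_cast this
  have hk_le : k.toNat ≤ #(univ : Finset ι) := by
    have : (k : ℝ) ≤ #(univ : Finset ι) := by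
      simpa [hk] using sum_le_card_nsmul univ _ 1 fun i _ => (Int.fract_lt_one (x i)).le
    have : k ≤ #(univ : Finset ι) := by exact_mod_cast this
    omega
  obtain ⟨S, -, hS⟩ := exists_subset_card_eq hk_le
  refine ⟨fun i => ⌊x i⌋ + if i ∈ S then 1 else 0, ?_, fun i => ?_⟩
  · rw [sum_add_distrib, sum_ite_mem, univ_inter, sum_const, nsmul_one, hS]
    omega
  · have h₀ := Int.fract_nonneg (x i)
    have h₁ := Int.fract_lt_one (x i)
    have h₂ := Int.floor_add_fract (x i)
    rw [abs_le]
    dsimp only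
    split_ifs <;> push_cast <;> constructor <;> linarith

theorem orthant_cover_of_simplex_general
    (d : ℕ) (c : Fin d → ℝ)
    (T : ℝ) :
    ∀ t : Fin d → ℝ, 0 ≤ ∑ i, t i → (∀ i, t i ≤ c i * T) →
      ∃ z : Fin d → ℤ, (∑ i, z i) = 0 ∧
        (∀ i, |(z i : ℝ) - (t i - (∑ j, t j) / d)| ≤ d) ∧
        ∀ i, (z i : ℝ) - d ≤ t i := by
  intro t ht _
  obtain ⟨z, hz, hzt⟩ := exists_int_sum_eq_and_abs_sub_le_one
    (fun i => t i - (∑ j, t j) / d) 0 (by simpa using sum_sub_sum_div_card t)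
  have hd (i : Fin d) : (1 : ℝ) ≤ d := by exact_mod_cast i.pos
  refine ⟨z, hz, fun i => (hzt i).trans (hd i), fun i => ?_⟩
  have hmean : 0 ≤ (∑ j, t j) / d := by positivity
  linarith [(abs_le.mp (hzt i)).2, hd i]

/-- the region `Ũ = {t : ⟨t,e⟩ ≥ 0, tᵢ ≤ cᵢ T̃}` is covered by
the translated positive orthants with vertices `z − d·e`, where `z` ranges over
integer points on (a bounded enlargement of) the face `⟨t,e⟩ = 0`: for each
`t ∈ Ũ` there is an integer point `z` with `∑ zᵢ = 0`, lying within distance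
`d` (coordinatewise) of the orthogonal projection `t̂ = t − (⟨t,e⟩/d)e` of `t`
onto the hyperplane `⟨t,e⟩ = 0`, such that `t ≥ z − d·e` coordinatewise. -/
theorem orthant_cover_of_simplex
    (d : ℕ) (hd : 1 ≤ d) (c : Fin d → ℝ) (hc : ∀ i, 0 < c i)
    (T : ℝ) (hT : 0 < T) :
    ∀ t : Fin d → ℝ, 0 ≤ ∑ i, t i → (∀ i, t i ≤ c i * T) →
      ∃ z : Fin d → ℤ, (∑ i, z i) = 0 ∧
        (∀ i, |(z i : ℝ) - (t i - (∑ j, t j) / d)| ≤ d) ∧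
        ∀ i, (z i : ℝ) - d ≤ t i :=
  orthant_cover_of_simplex_general d c T
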